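/- Let R be a commutative ring, and let T_R ∈ R[[q]] be the image under the canonical map ℤ[[q]] → R[[q]] of the formal power series T := q · ∏_{n=1}^{∞}(1 − q^{25n}) · (∏_{n=1}^{∞}(1 − qⁿ))^{−1} ∈ ℤ[[q]]. Let U₅ : R[[q]] → R[[q]] be the linear operator defined on coefficients by U₅(Σ aₙ qⁿ) = Σ a_{5n} qⁿ. Then for all natural numbers a, b and every power series X ∈ R[[q]], one has U₅(T_R^{5a+b} · X) ≡ T_R^{a} · U₅(T_R^{b} · X) (mod 5), i.e. U₅(T_R^{5a+b}·X) − T_R^{a}·U₅(T_R^{b}·X) lies in 5·R[[q]]. -/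

import Mathlib

open PowerSeries

/-- The coefficientwise-convergent infinite product `∏_{k=1}^∞ (1 - q^{m·k})` in `ℤ[[q]]`:
its `n`-th coefficient agrees with that of any sufficiently long finite partial product
(all factors with `m·(k+1) > n` leave the coefficient of `qⁿ` unchanged), so it may be
defined coefficientwise via the stabilized partial products. -/
noncomputable def etaProd (m : ℕ) : PowerSeries ℤ :=
  PowerSeries.mk fun n =>
    PowerSeries.coeff n (∏ k ∈ Finset.range (n + 1), (1 - (X : PowerSeries ℤ) ^ (m * (k + 1))))

/-- `T = q · ∏(1 - q^{25n}) / ∏(1 - qⁿ) = 1/t₂₅`, as a formal power series over `ℤ`;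
the inverse of `∏(1 - qⁿ)` exists since its constant term is the unit `1`, and is given
by `PowerSeries.invOfUnit _ 1`. -/
noncomputable def Tps : PowerSeries ℤ :=
  (X : PowerSeries ℤ) * etaProd 25 * (etaProd 1).invOfUnit 1

/-- The Atkin operator `U₅ : Σ aₙ qⁿ ↦ Σ a_{5n} qⁿ` on formal power series over any ring. -/
noncomputable def U5 {R : Type*} [CommRing R] (f : PowerSeries R) : PowerSeries R :=
  PowerSeries.mk fun n => PowerSeries.coeff (5 * n) f


open Finset
section Aux

noncomputable def expand5 {R : Type*} [CommRing R] (f : PowerSeries R) : PowerSeries R :=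
  PowerSeries.mk fun n => if 5 ∣ n then PowerSeries.coeff (n / 5) f else 0

lemma coeff_expand5 {R : Type*} [CommRing R] (f : PowerSeries R) (n : ℕ) :
    PowerSeries.coeff n (expand5 f) = if 5 ∣ n then PowerSeries.coeff (n / 5) f else 0 := by
  simp [expand5]


lemma map_expand5 {R S : Type*} [CommRing R] [CommRing S] (φ : R →+* S) (f : PowerSeries R) :
    PowerSeries.map φ (expand5 f) = expand5 (PowerSeries.map φ f) := by
  ext n
  simp [coeff_expand5, coeff_map, apply_ite φ]

lemma image_mul5 (n : ℕ) : ∀ j ∈ Finset.range (5*n+1), 5 ∣ j → j ∈ (Finset.range (n+1)).image (fun k => 5*k) := by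
  intro j hj hd
  simp only [Finset.mem_image, Finset.mem_range] at *
  obtain ⟨k, rfl⟩ := hd
  exact ⟨k, by omega, rfl⟩

lemma U5_mul_expand5 {R : Type*} [CommRing R] (f g : PowerSeries R) :
    U5 (f * expand5 g) = U5 f * g := by
  ext n
  rw [U5, coeff_mk, coeff_mul, coeff_mul, Finset.Nat.sum_antidiagonal_eq_sum_range_succ_mk,
    Finset.Nat.sum_antidiagonal_eq_sum_range_succ_mk]
  have h1 : ∀ j ∈ Finset.range (5*n+1),
      PowerSeries.coeff j f * PowerSeries.coeff (5*n - j) (expand5 g)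
      = if 5 ∣ j then PowerSeries.coeff j f * PowerSeries.coeff ((5*n-j)/5) g else 0 := by
    intro j hj
    rw [Finset.mem_range] at hj
    rw [coeff_expand5]
    by_cases h : 5 ∣ j
    · have : 5 ∣ 5*n - j := by omega
      simp [h, this]
    · have : ¬ (5 ∣ 5*n - j) := by omega
      simp [h, this]
  rw [Finset.sum_congr rfl h1]
  have hsub : (Finset.range (n+1)).image (fun k => 5*k) ⊆ Finset.range (5*n+1) := by
    intro j hj
    simp only [Finset.mem_image, Finset.mem_range] at *
    obtain ⟨k, hk, rfl⟩ := hj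
    omega
  have hzero : ∀ j ∈ Finset.range (5*n+1), j ∉ (Finset.range (n+1)).image (fun k => 5*k) →
      (if 5 ∣ j then PowerSeries.coeff j f * PowerSeries.coeff ((5*n-j)/5) g else 0) = 0 := by
    intro j hj hnot
    rw [if_neg]
    intro hd
    exact hnot (image_mul5 n j hj hd)
  rw [← Finset.sum_subset hsub hzero, Finset.sum_image (by intro a _ b _ h; simp only at h; omega)]
  apply Finset.sum_congr rfl
  intro k hk
  rw [Finset.mem_range] at hk
  have h5 : (5*n - 5*k)/5 = n - k := by omega
  rw [if_pos ⟨k, rfl⟩, h5, U5, coeff_mk]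

lemma expand5_one {R : Type*} [CommRing R] : expand5 (1 : PowerSeries R) = 1 := by
  ext n
  rw [coeff_expand5]
  rcases Nat.eq_zero_or_pos n with rfl | hn
  · simp
  · have h1 : n ≠ 0 := by omega
    by_cases h : 5 ∣ n
    · have : n / 5 ≠ 0 := by omega
      simp [h, coeff_one, this, h1]
    · simp [h, coeff_one, h1]

lemma expand5_mul {R : Type*} [CommRing R] (f g : PowerSeries R) :
    expand5 (f * g) = expand5 f * expand5 g := by
  ext n
  rw [coeff_expand5, coeff_mul, Finset.Nat.sum_antidiagonal_eq_sum_range_succ_mk]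
  by_cases hn : 5 ∣ n
  · obtain ⟨m, rfl⟩ := hn
    rw [if_pos ⟨m, rfl⟩]
    have hm : 5 * m / 5 = m := by omega
    rw [hm, coeff_mul, Finset.Nat.sum_antidiagonal_eq_sum_range_succ_mk]
    have h1 : ∀ j ∈ Finset.range (5*m+1),
        PowerSeries.coeff j (expand5 f) * PowerSeries.coeff (5*m - j) (expand5 g)
        = if 5 ∣ j then PowerSeries.coeff (j/5) f * PowerSeries.coeff ((5*m-j)/5) g else 0 := by
      intro j hj
      rw [Finset.mem_range] at hj
      rw [coeff_expand5, coeff_expand5]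
      by_cases h : 5 ∣ j
      · have : 5 ∣ 5*m - j := by omega
        simp [h, this]
      · simp [h]
    rw [Finset.sum_congr rfl h1]
    have hsub : (Finset.range (m+1)).image (fun k => 5*k) ⊆ Finset.range (5*m+1) := by
      intro j hj
      simp only [Finset.mem_image, Finset.mem_range] at *
      obtain ⟨k, hk, rfl⟩ := hj
      omega
    have hzero : ∀ j ∈ Finset.range (5*m+1), j ∉ (Finset.range (m+1)).image (fun k => 5*k) →
        (if 5 ∣ j then PowerSeries.coeff (j/5) f * PowerSeries.coeff ((5*m-j)/5) g else 0) = 0 := by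
      intro j hj hnot
      rw [if_neg]
      intro hd
      exact hnot (image_mul5 m j hj hd)
    rw [← Finset.sum_subset hsub hzero, Finset.sum_image (by intro a _ b _ h; simp only at h; omega)]
    apply Finset.sum_congr rfl
    intro k hk
    rw [Finset.mem_range] at hk
    have h5 : (5*m - 5*k)/5 = m - k := by omega
    have h5' : 5*k/5 = k := by omega
    rw [if_pos ⟨k, rfl⟩, h5, h5']
  · rw [if_neg hn, coeff_mul, Finset.Nat.sum_antidiagonal_eq_sum_range_succ_mk]
    apply (Finset.sum_eq_zero ?_).symm
    intro j hj
    rw [Finset.mem_range] at hj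
    rw [coeff_expand5, coeff_expand5]
    by_cases h : 5 ∣ j
    · have : ¬ (5 ∣ n - j) := by omega
      simp [this]
    · simp [h]

lemma expand5_pow {R : Type*} [CommRing R] (f : PowerSeries R) (k : ℕ) :
    expand5 (f ^ k) = (expand5 f) ^ k := by
  induction k with
  | zero => simpa using expand5_one
  | succ k ih => rw [pow_succ, pow_succ, expand5_mul, ih]

lemma frobenius_expand5 (F : PowerSeries (ZMod 5)) : F ^ 5 = expand5 F := by
  ext n
  set P : Polynomial (ZMod 5) := trunc (n+1) F with hP
  have hdvd : (X : PowerSeries (ZMod 5)) ^ (n+1) ∣ F - (P : PowerSeries (ZMod 5)) := by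
    rw [X_pow_dvd_iff]
    intro m hm
    rw [map_sub, Polynomial.coeff_coe, hP, coeff_trunc, if_pos hm, sub_self]
  have hdvd5 : (X : PowerSeries (ZMod 5)) ^ (n+1) ∣ F ^ 5 - (P : PowerSeries (ZMod 5)) ^ 5 :=
    dvd_trans hdvd (sub_dvd_pow_sub_pow _ _ 5)
  have hco : PowerSeries.coeff n (F ^ 5) = PowerSeries.coeff n ((P : PowerSeries (ZMod 5)) ^ 5) := by
    rw [X_pow_dvd_iff] at hdvd5
    have := hdvd5 n (by omega)
    rw [map_sub, sub_eq_zero] at this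
    exact this
  have hfrob : Polynomial.expand (ZMod 5) 5 P = P ^ 5 := by
    haveI : Fact (Nat.Prime 5) := ⟨by norm_num⟩
    have := Polynomial.map_frobenius_expand (p := 5) P
    rwa [ZMod.frobenius_zmod, Polynomial.map_id] at this
  rw [hco, ← Polynomial.coe_pow, Polynomial.coeff_coe, ← hfrob,
    Polynomial.coeff_expand (by norm_num : 0 < 5), coeff_expand5]
  by_cases h : 5 ∣ n
  · rw [if_pos h, if_pos h, hP, coeff_trunc, if_pos (by omega : n / 5 < n + 1)]
  · rw [if_neg h, if_neg h]

lemma map_U5 {R S : Type*} [CommRing R] [CommRing S] (φ : R →+* S) (f : PowerSeries R) :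
    PowerSeries.map φ (U5 f) = U5 (PowerSeries.map φ f) := by
  ext n
  simp [U5, coeff_map]

lemma U5_sub {R : Type*} [CommRing R] (f g : PowerSeries R) : U5 (f - g) = U5 f - U5 g := by
  ext n
  simp [U5]

lemma int_frob (F : PowerSeries ℤ) (m : ℕ) :
    (5 : ℤ) ∣ PowerSeries.coeff m (F ^ 5 - expand5 F) := by
  have h : PowerSeries.map (Int.castRingHom (ZMod 5)) (F ^ 5 - expand5 F) = 0 := by
    rw [map_sub, map_pow, map_expand5, frobenius_expand5, sub_self]
  have h2 : ((PowerSeries.coeff m (F ^ 5 - expand5 F) : ℤ) : ZMod 5) = 0 := by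
    have := congrArg (PowerSeries.coeff m) h
    rwa [coeff_map, map_zero] at this
  exact (ZMod.intCast_zmod_eq_zero_iff_dvd _ 5).mp h2


end Aux

/-- For any commutative ring `R`, with `T_R` the image of `T` in `R[[q]]`, we have
`U₅(T_R^{5a+b} · X) ≡ T_R^a · U₅(T_R^b · X) (mod 5)` for all `a b : ℕ` and `X ∈ R[[q]]`. -/
theorem U5_T_pow_mul_congr (R : Type*) [CommRing R] (a b : ℕ) (f : PowerSeries R) (n : ℕ) :
    (5 : R) ∣ PowerSeries.coeff n
      (U5 ((PowerSeries.map (Int.castRingHom R) Tps) ^ (5 * a + b) * f)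
        - (PowerSeries.map (Int.castRingHom R) Tps) ^ a
          * U5 ((PowerSeries.map (Int.castRingHom R) Tps) ^ b * f)) := by
  set T : PowerSeries ℤ := Tps
  set I : Ideal R := Ideal.span {(5 : R)}
  let S := R ⧸ I
  let π : R →+* S := Ideal.Quotient.mk I
  rw [← Ideal.mem_span_singleton, ← Ideal.Quotient.eq_zero_iff_mem]
  have hπ : (Ideal.Quotient.mk I) (PowerSeries.coeff n _) = PowerSeries.coeff n
      (PowerSeries.map π (U5 ((PowerSeries.map (Int.castRingHom R) T) ^ (5 * a + b) * f)
        - (PowerSeries.map (Int.castRingHom R) T) ^ a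
          * U5 ((PowerSeries.map (Int.castRingHom R) T) ^ b * f))) := (coeff_map _ _ _).symm
  rw [hπ]
  have hcomp : π.comp (Int.castRingHom R) = Int.castRingHom S := Subsingleton.elim _ _
  set TS : PowerSeries S := PowerSeries.map (Int.castRingHom S) T with hTS
  have hmapT : PowerSeries.map π (PowerSeries.map (Int.castRingHom R) T) = TS := by
    ext m
    simp only [hTS, coeff_map, ← hcomp, RingHom.comp_apply]
  have h5S : (5 : S) = 0 := by
    have : (5 : R) ∈ I := Ideal.subset_span (Set.mem_singleton _)
    rw [← Ideal.Quotient.eq_zero_iff_mem] at this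
    exact (map_ofNat (Ideal.Quotient.mk I) 5).symm.trans this
  have hT5 : TS ^ 5 = expand5 TS := by
    ext m
    have : TS ^ 5 - expand5 TS = PowerSeries.map (Int.castRingHom S) (T ^ 5 - expand5 T) := by
      rw [map_sub, map_pow, map_expand5]
    have h1 : PowerSeries.coeff m (TS ^ 5 - expand5 TS) = 0 := by
      rw [this, coeff_map]
      obtain ⟨k, hk⟩ := int_frob T m
      rw [hk]
      simp only [map_mul, map_ofNat, h5S, zero_mul]
    rw [map_sub, sub_eq_zero] at h1
    exact h1
  rw [map_sub, map_U5, map_mul, map_mul, map_U5, map_mul, map_pow, map_pow, map_pow, hmapT]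
  have key : TS ^ (5 * a + b) = expand5 (TS ^ a) * TS ^ b := by
    rw [pow_add, pow_mul, hT5, ← expand5_pow]
  rw [key]
  have harr : expand5 (TS ^ a) * TS ^ b * PowerSeries.map π f
      = (TS ^ b * PowerSeries.map π f) * expand5 (TS ^ a) := by ring
  rw [harr, U5_mul_expand5, mul_comm, sub_self, map_zero]
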